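/- arXiv:2307.01036 — 3 statements merged into one kernel-verified Lean document; each statement's English description precedes it below -/
import Mathlib

section
/- Tail estimate for the negative part (Lemma 2.2). Let n ≥ 1, s ∈ (0,1), let a : 𝕊^{n-1} → [0,∞) be bounded measurable with a ≤ Λ, let x₀ ∈ ℝⁿ, R > 0, and let u : ℝⁿ → ℝ be continuous with u ≥ 0 in B_R(x₀) and satisfying u⁻(y) ≤ C̄(1 + |y − x₀|^{2s−δ}) for all y ∈ ℝⁿ, for some C̄ > 0 and δ ∈ (0, 2s). Let S be a subset of B_R(x₀) with d₀ := dist(S, ∂B_R(x₀)) > 0. Then there exists a constant C̃ > 0, depending only on n, s, Λ, R and C̄, such that for every x ∈ S, the integral ∫_{ℝⁿ} u⁻(x+y) |y|^{−n−2s} a(y/|y|) dy (which equals −L u⁻(x)) is at most C̃ (d₀^{−2s} + d₀^{−δ}). -/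
/-!
Points of `S` are at distance at least `d₀` from the sphere `∂B_R(x₀)`, so `B_{d₀}(x) ⊆ B_R(x₀)`
and `u⁻(x + y)` vanishes for `|y| < d₀`. For `|y| ≥ d₀`, the growth bound together with
`|x - x₀| < R` gives `u⁻(x + y) ≤ C̄ (1 + 2^q R^q) + C̄ 2^q |y|^q` with `q = 2s - δ`, so the
integral is dominated by the tails `∫_{|y| ≥ d₀} |y|^{-n-2s}` and `∫_{|y| ≥ d₀} |y|^{-n-δ}`.
By scaling, `∫_{|y| ≥ d} |y|^{-n-p} = d^{-p} ∫_{|y| ≥ 1} |y|^{-n-p}`, and the last integral is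
finite for `p > 0`.
-/

open MeasureTheory Metric Set Real
open scoped ENNReal

theorem Real.add_rpow_le_two_rpow_mul_rpow_add_rpow {a b p : ℝ} (ha : 0 ≤ a) (hb : 0 ≤ b)
    (hp : 0 ≤ p) : (a + b) ^ p ≤ 2 ^ p * (a ^ p + b ^ p) := calc
  (a + b) ^ p ≤ (2 * max a b) ^ p := by rw [two_mul]; gcongr <;> simp
  _ = 2 ^ p * (max a b) ^ p := mul_rpow zero_le_two (le_max_of_le_left ha)
  _ = 2 ^ p * max (a ^ p) (b ^ p) := by rw [rpow_max ha hb hp]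
  _ ≤ 2 ^ p * (a ^ p + b ^ p) := by
    gcongr; exact max_le_add_of_nonneg (rpow_nonneg ha p) (rpow_nonneg hb p)

theorem one_add_norm_add_rpow_le {E : Type*} [SeminormedAddCommGroup E] {z y : E} {R q : ℝ}
    (hz : ‖z‖ ≤ R) (hq : 0 ≤ q) :
    1 + ‖z + y‖ ^ q ≤ (1 + 2 ^ q * R ^ q) + 2 ^ q * ‖y‖ ^ q := by
  have : ‖z + y‖ ^ q ≤ 2 ^ q * (R ^ q + ‖y‖ ^ q) := calc
    ‖z + y‖ ^ q ≤ (‖z‖ + ‖y‖) ^ q := by gcongr; exact norm_add_le z y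
    _ ≤ 2 ^ q * (‖z‖ ^ q + ‖y‖ ^ q) :=
      add_rpow_le_two_rpow_mul_rpow_add_rpow (norm_nonneg z) (norm_nonneg y) hq
    _ ≤ 2 ^ q * (R ^ q + ‖y‖ ^ q) := by gcongr
  linarith

theorem ball_subset_ball_of_forall_sphere_le_dist {E : Type*} [NormedAddCommGroup E]
    [NormedSpace ℝ E] {x x₀ : E} {R d : ℝ} (hx : x ∈ ball x₀ R)
    (hd : ∀ z ∈ sphere x₀ R, d ≤ dist x z) : ball x d ⊆ ball x₀ R := by
  intro z hz
  by_contra hzR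
  obtain ⟨t, ht, hw⟩ : ∃ t ∈ Icc (0 : ℝ) 1, dist (AffineMap.lineMap x z t) x₀ = R :=
    intermediate_value_Icc zero_le_one (by fun_prop)
      ⟨by simpa using (mem_ball.1 hx).le, by simpa using hzR⟩
  have hdt : d ≤ t * dist x z := by
    simpa [dist_comm x, dist_lineMap_left, abs_of_nonneg ht.1] using hd _ hw
  have hzd : dist x z < d := mem_ball'.1 hz
  exact hzd.not_ge (hdt.trans (mul_le_of_le_one_left dist_nonneg ht.2))

section TailIntegral

open Module

variable {E : Type*} [NormedAddCommGroup E] [NormedSpace ℝ E] [FiniteDimensional ℝ E]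
  [MeasurableSpace E] [BorelSpace E] (μ : Measure E) [μ.IsAddHaarMeasure]

theorem lintegral_comp_inv_smul_addHaar (f : E → ℝ≥0∞) {r : ℝ} (hr : 0 < r) :
    ∫⁻ x, f (r⁻¹ • x) ∂μ = ENNReal.ofReal (r ^ finrank ℝ E) * ∫⁻ x, f x ∂μ := calc
  ∫⁻ x, f (r⁻¹ • x) ∂μ = ∫⁻ x, f x ∂(μ.map (r⁻¹ • ·)) :=
    (lintegral_map_equiv f (MeasurableEquiv.smul₀ r⁻¹ (inv_ne_zero hr.ne'))).symm
  _ = ENNReal.ofReal (r ^ finrank ℝ E) * ∫⁻ x, f x ∂μ := by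
    rw [Measure.map_addHaar_smul μ (inv_ne_zero hr.ne'), lintegral_smul_measure, inv_pow,
      inv_inv, abs_of_pos (pow_pos hr _), smul_eq_mul]

theorem setLIntegral_norm_rpow_ge_eq {p d : ℝ} (hd : 0 < d) :
    ∫⁻ y in {y : E | d ≤ ‖y‖}, ENNReal.ofReal (‖y‖ ^ (-(finrank ℝ E : ℝ) - p)) ∂μ =
      ENNReal.ofReal (d ^ (-p)) *
        ∫⁻ y in {y : E | 1 ≤ ‖y‖}, ENNReal.ofReal (‖y‖ ^ (-(finrank ℝ E : ℝ) - p)) ∂μ := by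
  set e := -(finrank ℝ E : ℝ) - p
  have hmeas (c : ℝ) : MeasurableSet {y : E | c ≤ ‖y‖} :=
    measurableSet_le measurable_const measurable_norm
  have hscale (y : E) : {y : E | d ≤ ‖y‖}.indicator (fun y ↦ ENNReal.ofReal (‖y‖ ^ e)) y =
      ENNReal.ofReal (d ^ e) *
        {y : E | 1 ≤ ‖y‖}.indicator (fun y ↦ ENNReal.ofReal (‖y‖ ^ e)) (d⁻¹ • y) := by
    have hnorm : ‖d⁻¹ • y‖ = d⁻¹ * ‖y‖ := by rw [norm_smul, norm_inv, norm_of_nonneg hd.le]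
    have hmem : d⁻¹ • y ∈ {y : E | 1 ≤ ‖y‖} ↔ y ∈ {y : E | d ≤ ‖y‖} :=
      show 1 ≤ ‖d⁻¹ • y‖ ↔ d ≤ ‖y‖ by rw [hnorm, one_le_inv_mul₀ hd]
    by_cases hy : y ∈ {y : E | d ≤ ‖y‖}
    · rw [indicator_of_mem hy, indicator_of_mem (hmem.2 hy), ← ENNReal.ofReal_mul (by positivity),
        hnorm, mul_rpow (inv_nonneg.2 hd.le) (norm_nonneg y), inv_rpow hd.le,
        mul_inv_cancel_left₀ (by positivity)]
    · rw [indicator_of_notMem hy, indicator_of_notMem (mt hmem.1 hy), mul_zero]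
  rw [← lintegral_indicator (hmeas d), ← lintegral_indicator (hmeas 1), lintegral_congr hscale,
    lintegral_const_mul' _ _ ENNReal.ofReal_ne_top, lintegral_comp_inv_smul_addHaar μ _ hd,
    ← mul_assoc, ← ENNReal.ofReal_mul (by positivity), ← rpow_natCast, ← rpow_add hd]
  congr 3
  ring

theorem setLIntegral_norm_rpow_ge_one_lt_top {p : ℝ} (hp : 0 < p) :
    ∫⁻ y in {y : E | 1 ≤ ‖y‖}, ENNReal.ofReal (‖y‖ ^ (-(finrank ℝ E : ℝ) - p)) ∂μ < ∞ := by
  set k := (finrank ℝ E : ℝ) + p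
  have hbound (y : E) (hy : 1 ≤ ‖y‖) :
      ENNReal.ofReal (‖y‖ ^ (-(finrank ℝ E : ℝ) - p)) ≤
        ENNReal.ofReal (2 ^ k) * ENNReal.ofReal ((1 + ‖y‖) ^ (-k)) := by
    rw [← ENNReal.ofReal_mul (by positivity)]
    refine ENNReal.ofReal_le_ofReal ?_
    calc ‖y‖ ^ (-(finrank ℝ E : ℝ) - p) = 2 ^ k * ((2 * ‖y‖) ^ k)⁻¹ := by
          rw [show -(finrank ℝ E : ℝ) - p = -k by ring, rpow_neg (norm_nonneg y),
            mul_rpow zero_le_two (norm_nonneg y)]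
          field_simp
      _ ≤ 2 ^ k * ((1 + ‖y‖) ^ k)⁻¹ := by gcongr; linarith
      _ = 2 ^ k * (1 + ‖y‖) ^ (-k) := by rw [rpow_neg (by positivity)]
  calc ∫⁻ y in {y : E | 1 ≤ ‖y‖}, ENNReal.ofReal (‖y‖ ^ (-(finrank ℝ E : ℝ) - p)) ∂μ
      ≤ ∫⁻ y in {y : E | 1 ≤ ‖y‖},
          ENNReal.ofReal (2 ^ k) * ENNReal.ofReal ((1 + ‖y‖) ^ (-k)) ∂μ :=
        setLIntegral_mono' (measurableSet_le measurable_const measurable_norm) hbound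
    _ ≤ ∫⁻ y, ENNReal.ofReal (2 ^ k) * ENNReal.ofReal ((1 + ‖y‖) ^ (-k)) ∂μ :=
        setLIntegral_le_lintegral _ _
    _ < ∞ := by
      rw [lintegral_const_mul' _ _ ENNReal.ofReal_ne_top]
      exact ENNReal.mul_lt_top ENNReal.ofReal_lt_top
        (finite_integral_one_add_norm (by linarith))

theorem exists_setLIntegral_norm_rpow_ge_eq {p : ℝ} (hp : 0 < p) : ∃ c ≥ 0, ∀ d > 0,
    ∫⁻ y in {y : E | d ≤ ‖y‖}, ENNReal.ofReal (‖y‖ ^ (-(finrank ℝ E : ℝ) - p)) ∂μ =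
      ENNReal.ofReal (c * d ^ (-p)) := by
  refine ⟨(∫⁻ y in {y : E | 1 ≤ ‖y‖}, ENNReal.ofReal (‖y‖ ^ (-(finrank ℝ E : ℝ) - p)) ∂μ).toReal,
    ENNReal.toReal_nonneg, fun d hd ↦ ?_⟩
  rw [setLIntegral_norm_rpow_ge_eq μ hd, ENNReal.ofReal_mul ENNReal.toReal_nonneg,
    ENNReal.ofReal_toReal (setLIntegral_norm_rpow_ge_one_lt_top μ hp).ne, mul_comm]

end TailIntegral

theorem negPart_mul_kernel_le_indicator {E : Type*} [NormedAddCommGroup E] [NormedSpace ℝ E]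
    {u a : E → ℝ} {x₀ x : E} {R C Λ k p δ d : ℝ} (hC : 0 ≤ C) (hδp : δ ≤ p) (hd : 0 < d)
    (ha : ∀ θ : E, ‖θ‖ = 1 → 0 ≤ a θ ∧ a θ ≤ Λ)
    (hu : ∀ y, max (-(u y)) 0 ≤ C * (1 + ‖y - x₀‖ ^ (p - δ)))
    (hx : ‖x - x₀‖ ≤ R) (hnear : ∀ y, ‖y‖ < d → 0 ≤ u (x + y)) (y : E) :
    ENNReal.ofReal (max (-(u (x + y))) 0 * ‖y‖ ^ (-k - p) * a (‖y‖⁻¹ • y)) ≤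
      {y : E | d ≤ ‖y‖}.indicator (fun y ↦
        ENNReal.ofReal (Λ * C * (1 + 2 ^ (p - δ) * R ^ (p - δ)) * ‖y‖ ^ (-k - p)) +
          ENNReal.ofReal (Λ * C * 2 ^ (p - δ) * ‖y‖ ^ (-k - δ))) y := by
  by_cases hy : y ∈ {y : E | d ≤ ‖y‖}
  · rw [indicator_of_mem hy]
    have hy0 : 0 < ‖y‖ := hd.trans_le hy
    obtain ⟨ha0, haΛ⟩ := ha (‖y‖⁻¹ • y) <| by
      rw [norm_smul, norm_inv, norm_norm, inv_mul_cancel₀ hy0.ne']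
    have hgrowth : max (-(u (x + y))) 0 ≤
        C * ((1 + 2 ^ (p - δ) * R ^ (p - δ)) + 2 ^ (p - δ) * ‖y‖ ^ (p - δ)) := by
      refine (hu _).trans (mul_le_mul_of_nonneg_left ?_ hC)
      rw [add_sub_right_comm]
      exact one_add_norm_add_rpow_le hx (sub_nonneg.2 hδp)
    refine (ENNReal.ofReal_le_ofReal ?_).trans ENNReal.ofReal_add_le
    calc max (-(u (x + y))) 0 * ‖y‖ ^ (-k - p) * a (‖y‖⁻¹ • y)
        ≤ C * ((1 + 2 ^ (p - δ) * R ^ (p - δ)) + 2 ^ (p - δ) * ‖y‖ ^ (p - δ)) *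
            ‖y‖ ^ (-k - p) * Λ := by
          gcongr
          exact mul_nonneg ((le_max_right _ _).trans hgrowth) (by positivity)
      _ = Λ * C * (1 + 2 ^ (p - δ) * R ^ (p - δ)) * ‖y‖ ^ (-k - p) +
            Λ * C * 2 ^ (p - δ) * ‖y‖ ^ (-k - δ) := by
          rw [show -k - δ = (p - δ) + (-k - p) by ring, rpow_add hy0]
          ring
  · rw [indicator_of_notMem hy, max_eq_right (neg_nonpos.2 (hnear y (not_le.1 hy)))]
    simp

theorem tail_estimate_negative_part_general
    (n : ℕ) (s : ℝ) (hs : s ∈ Set.Ioo (0 : ℝ) 1)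
    (Lam : ℝ) (R : ℝ) (hR : 0 < R)
    (Cbar : ℝ) (hCbar : 0 < Cbar) (δ : ℝ) (hδ : δ ∈ Set.Ioo 0 (2 * s)) :
    ∃ Ctilde > 0,
      ∀ a : EuclideanSpace ℝ (Fin n) → ℝ, Measurable a →
      (∀ θ : EuclideanSpace ℝ (Fin n), ‖θ‖ = 1 → 0 ≤ a θ ∧ a θ ≤ Lam) →
      ∀ x₀ : EuclideanSpace ℝ (Fin n), ∀ u : EuclideanSpace ℝ (Fin n) → ℝ,
        Continuous u →
        (∀ x ∈ ball x₀ R, 0 ≤ u x) →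
        (∀ y, max (-(u y)) 0 ≤ Cbar * (1 + ‖y - x₀‖ ^ (2 * s - δ))) →
        ∀ S : Set (EuclideanSpace ℝ (Fin n)), S ⊆ ball x₀ R →
        ∀ d₀ > (0 : ℝ), (∀ x ∈ S, ∀ z : EuclideanSpace ℝ (Fin n),
          dist z x₀ = R → d₀ ≤ dist x z) →
        ∀ x ∈ S,
          (∫⁻ y : EuclideanSpace ℝ (Fin n),
              ENNReal.ofReal (max (-(u (x + y))) 0 * ‖y‖ ^ (-(n : ℝ) - 2 * s) *
                a (‖y‖⁻¹ • y)))
            ≤ ENNReal.ofReal (Ctilde * (d₀ ^ (-(2 * s)) + d₀ ^ (-δ))) := by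
  obtain ⟨hs0, -⟩ := hs
  obtain ⟨hδ0, hδs⟩ := hδ
  obtain ⟨c₁, hc₁, htail₁⟩ := exists_setLIntegral_norm_rpow_ge_eq
    (volume : Measure (EuclideanSpace ℝ (Fin n))) (by positivity : 0 < 2 * s)
  obtain ⟨c₂, hc₂, htail₂⟩ := exists_setLIntegral_norm_rpow_ge_eq
    (volume : Measure (EuclideanSpace ℝ (Fin n))) hδ0
  simp only [finrank_euclideanSpace_fin] at htail₁ htail₂
  set K₁ := max Lam 0 * Cbar * (1 + 2 ^ (2 * s - δ) * R ^ (2 * s - δ))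
  set K₂ := max Lam 0 * Cbar * 2 ^ (2 * s - δ)
  have hK₁ : 0 ≤ K₁ := by positivity
  have hK₂ : 0 ≤ K₂ := by positivity
  refine ⟨K₁ * c₁ + K₂ * c₂ + 1, by positivity, ?_⟩
  intro a _ ha x₀ u _ hu_nonneg hu_growth S hS d₀ hd₀ hdist x hx
  have hnear (y : EuclideanSpace ℝ (Fin n)) (hy : ‖y‖ < d₀) : 0 ≤ u (x + y) :=
    hu_nonneg _ <| ball_subset_ball_of_forall_sphere_le_dist (hS hx) (hdist x hx) <| by
      simpa using hy
  calc _ ≤ ∫⁻ y in {y : EuclideanSpace ℝ (Fin n) | d₀ ≤ ‖y‖},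
        ENNReal.ofReal (K₁ * ‖y‖ ^ (-(n : ℝ) - 2 * s)) +
          ENNReal.ofReal (K₂ * ‖y‖ ^ (-(n : ℝ) - δ)) := by
        rw [← lintegral_indicator (measurableSet_le measurable_const measurable_norm)]
        exact lintegral_mono <| negPart_mul_kernel_le_indicator hCbar.le hδs.le hd₀
          (fun θ hθ ↦ ⟨(ha θ hθ).1, (ha θ hθ).2.trans (le_max_left _ _)⟩) hu_growth
          (mem_ball_iff_norm.1 (hS hx)).le hnear
    _ = ENNReal.ofReal (K₁ * (c₁ * d₀ ^ (-(2 * s)))) +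
          ENNReal.ofReal (K₂ * (c₂ * d₀ ^ (-δ))) := by
        rw [lintegral_add_left (by fun_prop)]
        simp_rw [ENNReal.ofReal_mul hK₁, ENNReal.ofReal_mul hK₂]
        rw [lintegral_const_mul' _ _ ENNReal.ofReal_ne_top,
          lintegral_const_mul' _ _ ENNReal.ofReal_ne_top, htail₁ d₀ hd₀, htail₂ d₀ hd₀]
    _ ≤ ENNReal.ofReal ((K₁ * c₁ + K₂ * c₂ + 1) * (d₀ ^ (-(2 * s)) + d₀ ^ (-δ))) := by
        rw [← ENNReal.ofReal_add (by positivity) (by positivity)]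
        gcongr
        nlinarith [mul_nonneg hK₁ hc₁, mul_nonneg hK₂ hc₂,
          rpow_nonneg hd₀.le (-(2 * s)), rpow_nonneg hd₀.le (-δ)]

/-- **Lemma 2.2** (tail estimate for the negative part). The integral
`∫ u⁻(x+y) |y|^{-n-2s} a(y/|y|) dy` (which equals `-L u⁻(x)`) is estimated by
`C̃ (d₀^{-2s} + d₀^{-δ})`, with `C̃` depending only on `n, s, Λ, R, C̄` (and `δ`). -/
theorem tail_estimate_negative_part
    (n : ℕ) (hn : 1 ≤ n) (s : ℝ) (hs : s ∈ Set.Ioo (0 : ℝ) 1)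
    (Lam : ℝ) (R : ℝ) (hR : 0 < R)
    (Cbar : ℝ) (hCbar : 0 < Cbar) (δ : ℝ) (hδ : δ ∈ Set.Ioo 0 (2 * s)) :
    ∃ Ctilde > 0,
      ∀ a : EuclideanSpace ℝ (Fin n) → ℝ, Measurable a →
      (∀ θ : EuclideanSpace ℝ (Fin n), ‖θ‖ = 1 → 0 ≤ a θ ∧ a θ ≤ Lam) →
      ∀ x₀ : EuclideanSpace ℝ (Fin n), ∀ u : EuclideanSpace ℝ (Fin n) → ℝ,
        Continuous u →
        (∀ x ∈ ball x₀ R, 0 ≤ u x) →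
        (∀ y, max (-(u y)) 0 ≤ Cbar * (1 + ‖y - x₀‖ ^ (2 * s - δ))) →
        ∀ S : Set (EuclideanSpace ℝ (Fin n)), S ⊆ ball x₀ R →
        ∀ d₀ > (0 : ℝ), (∀ x ∈ S, ∀ z : EuclideanSpace ℝ (Fin n),
          dist z x₀ = R → d₀ ≤ dist x z) →
        ∀ x ∈ S,
          (∫⁻ y : EuclideanSpace ℝ (Fin n),
              ENNReal.ofReal (max (-(u (x + y))) 0 * ‖y‖ ^ (-(n : ℝ) - 2 * s) *
                a (‖y‖⁻¹ • y)))
            ≤ ENNReal.ofReal (Ctilde * (d₀ ^ (-(2 * s)) + d₀ ^ (-δ))) :=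
  tail_estimate_negative_part_general n s hs Lam R hR Cbar hCbar δ hδ
end

section
/- Boundary expansion of the fractional Green function of the ball, case n ≠ 2s (Lemma 5.1). Let n ≥ 1, s ∈ (0,1) with n ≠ 2s, let 0 < ρ₀ < ρ, and let e ∈ 𝕊^{n-1}. Define, for x, z ∈ B_ρ with x ≠ z, r₀(x,z) := (ρ² − |x|²)(ρ² − |z|²)/(ρ² |x − z|²) and G(x,z) := |x − z|^{2s−n} ∫₀^{r₀(x,z)} t^{s−1} (1 + t)^{−n/2} dt. Then, as δ → 0⁺, G((ρ − δ)e, z) = a₀(z,e) δ^s + o(δ^s) uniformly in z ∈ B_{ρ₀}, where a₀(z,e) := 2^s (ρ² − |z|²)^s / (s ρ^s |ρe − z|ⁿ); that is, sup_{z ∈ B_{ρ₀}} |G((ρ−δ)e, z) − a₀(z,e) δ^s| / δ^s → 0 as δ → 0⁺. -/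
open MeasureTheory Filter Metric Set Real
open scoped Topology

noncomputable section

/-- The quantity `r₀(x,z) = (ρ² - |x|²)(ρ² - |z|²)/(ρ² |x - z|²)` appearing in the
explicit formula for the fractional Green function of the ball `B_ρ`. -/
def rzero (n : ℕ) (ρ : ℝ) (x z : EuclideanSpace ℝ (Fin n)) : ℝ :=
  (ρ ^ 2 - ‖x‖ ^ 2) * (ρ ^ 2 - ‖z‖ ^ 2) / (ρ ^ 2 * ‖x - z‖ ^ 2)

/-- The fractional Green function of the ball `B_ρ` (case `n ≠ 2s`), up to a positive
normalizing constant: `G(x,z) = |x-z|^{2s-n} ∫₀^{r₀(x,z)} t^{s-1} (1+t)^{-n/2} dt`. -/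
def greenFn (n : ℕ) (s ρ : ℝ) (x z : EuclideanSpace ℝ (Fin n)) : ℝ :=
  ‖x - z‖ ^ (2 * s - n) *
    ∫ t in (0 : ℝ)..(rzero n ρ x z), t ^ (s - 1) * (1 + t) ^ (-(n : ℝ) / 2)


lemma aux_pow_sub_pow (n : ℕ) {a b M : ℝ} (ha : 0 ≤ a) (hb : 0 ≤ b) (haM : a ≤ M) (hbM : b ≤ M) :
    |a ^ n - b ^ n| ≤ n * M ^ (n - 1) * |a - b| := by
  have hM : 0 ≤ M := le_trans ha haM
  have key : a ^ n - b ^ n = (∑ i ∈ Finset.range n, a ^ i * b ^ (n - 1 - i)) * (a - b) :=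
    (geom_sum₂_mul a b n).symm
  rw [key, abs_mul]
  gcongr
  calc |∑ i ∈ Finset.range n, a ^ i * b ^ (n - 1 - i)|
      ≤ ∑ i ∈ Finset.range n, |a ^ i * b ^ (n - 1 - i)| := Finset.abs_sum_le_sum_abs _ _
    _ ≤ ∑ i ∈ Finset.range n, M ^ (n - 1) := by
        refine Finset.sum_le_sum fun i hi => ?_
        rw [abs_mul, abs_pow, abs_pow, abs_of_nonneg ha, abs_of_nonneg hb]
        have h1 : a ^ i * b ^ (n - 1 - i) ≤ M ^ i * M ^ (n - 1 - i) := by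
          gcongr
        have h2 : M ^ i * M ^ (n - 1 - i) = M ^ (n - 1) := by
          rw [← pow_add]
          congr 1
          have := Finset.mem_range.mp hi
          omega
        linarith [h1, h2.le]
    _ = n * M ^ (n - 1) := by rw [Finset.sum_const, Finset.card_range, nsmul_eq_mul]

lemma aux_rpow_sub {s a b : ℝ} (hs0 : 0 ≤ s) (hs1 : s ≤ 1) (hb : 0 ≤ b) (hab : b ≤ a) :
    a ^ s - b ^ s ≤ (a - b) ^ s := by
  have ha : 0 ≤ a := le_trans hb hab
  have h := NNReal.rpow_add_le_add_rpow (a - b).toNNReal b.toNNReal hs0 hs1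
  have hadd : (a - b).toNNReal + b.toNNReal = a.toNNReal := by
    rw [← Real.toNNReal_add (by linarith) hb]; ring_nf
  rw [hadd] at h
  have h' : (a.toNNReal : ℝ) ^ s ≤ ((a - b).toNNReal : ℝ) ^ s + (b.toNNReal : ℝ) ^ s := by
    have := NNReal.coe_le_coe.mpr h
    simpa [NNReal.coe_rpow, NNReal.coe_add] using this
  rw [Real.coe_toNNReal _ ha, Real.coe_toNNReal _ (by linarith), Real.coe_toNNReal _ hb] at h'
  linarith

lemma aux_bern (n : ℕ) {r : ℝ} (hr : 0 ≤ r) (hr1 : r ≤ 1) :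
    (1 + r) ^ n ≤ 1 + ((2:ℝ) ^ n - 1) * r := by
  induction n with
  | zero => simp
  | succ k ih =>
    have h2 : (1 + r) ^ k ≤ 2 ^ k := by
      apply pow_le_pow_left₀ (by linarith) (by linarith)
    have hp : (0:ℝ) ≤ (1+r)^k := by positivity
    rw [pow_succ, pow_succ]
    nlinarith [ih, h2, hp, hr]

lemma aux_one_sub_rpow (n : ℕ) {r : ℝ} (hr : 0 ≤ r) (hr1 : r ≤ 1) :
    1 - (1 + r) ^ (-(n : ℝ) / 2) ≤ ((2:ℝ) ^ n - 1) * r := by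
  have h1 : (1 + r) ^ (-(n:ℝ)) ≤ (1 + r) ^ (-(n : ℝ) / 2) := by
    apply Real.rpow_le_rpow_of_exponent_le (by linarith)
    have : (0:ℝ) ≤ (n:ℝ) := Nat.cast_nonneg n
    linarith
  have h2 : ((1 + r) ^ n : ℝ)⁻¹ = (1 + r) ^ (-(n:ℝ)) := by
    rw [Real.rpow_neg (by linarith), Real.rpow_natCast]
  have h3 : (1 + ((2:ℝ)^n - 1) * r)⁻¹ ≤ ((1 + r) ^ n : ℝ)⁻¹ := by
    apply inv_anti₀ (by positivity) (aux_bern n hr hr1)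
  have hc : (0:ℝ) ≤ ((2:ℝ)^n - 1) * r := by
    have h2n : (1:ℝ) ≤ 2 ^ n := one_le_pow₀ (by norm_num)
    nlinarith
  have h4 : 1 - ((2:ℝ)^n - 1) * r ≤ (1 + ((2:ℝ)^n - 1) * r)⁻¹ := by
    rw [← one_div, le_div_iff₀ (by positivity)]
    nlinarith [sq_nonneg (((2:ℝ)^n - 1) * r)]
  linarith


lemma aux_sandwich (n : ℕ) {s r : ℝ} (hs0 : 0 < s) (hr : 0 < r) :
    (1 + r) ^ (-(n : ℝ) / 2) * (r ^ s / s) ≤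
      (∫ t in (0:ℝ)..r, t ^ (s - 1) * (1 + t) ^ (-(n : ℝ) / 2)) ∧
    (∫ t in (0:ℝ)..r, t ^ (s - 1) * (1 + t) ^ (-(n : ℝ) / 2)) ≤ r ^ s / s := by
  have hs1 : (-1:ℝ) < s - 1 := by linarith
  have hInt1 : IntervalIntegrable (fun t : ℝ => t ^ (s - 1)) volume 0 r :=
    intervalIntegral.intervalIntegrable_rpow' hs1
  have hcont : ContinuousOn (fun t : ℝ => (1 + t) ^ (-(n : ℝ) / 2)) (Set.uIcc 0 r) := by
    apply ContinuousOn.rpow_const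
    · exact (continuous_const.add continuous_id).continuousOn
    · intro t ht
      rw [Set.uIcc_of_le hr.le] at ht
      left; linarith [ht.1]
  have hIntG : IntervalIntegrable (fun t : ℝ => t ^ (s - 1) * (1 + t) ^ (-(n : ℝ) / 2))
      volume 0 r := hInt1.mul_continuousOn hcont
  have hval : (∫ t in (0:ℝ)..r, t ^ (s - 1)) = r ^ s / s := by
    rw [integral_rpow (Or.inl hs1)]
    rw [Real.zero_rpow (by linarith : s - 1 + 1 ≠ 0)]
    norm_num
  constructor
  · have hlow : (∫ t in (0:ℝ)..r, (1 + r) ^ (-(n : ℝ) / 2) * t ^ (s - 1)) ≤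
        (∫ t in (0:ℝ)..r, t ^ (s - 1) * (1 + t) ^ (-(n : ℝ) / 2)) := by
      apply intervalIntegral.integral_mono_on hr.le (hInt1.const_mul _) hIntG
      intro t ht
      rw [mul_comm]
      apply mul_le_mul_of_nonneg_left _ (Real.rpow_nonneg ht.1 _)
      apply Real.rpow_le_rpow_of_nonpos (by linarith [ht.1]) (by linarith [ht.2])
      have : (0:ℝ) ≤ (n:ℝ) := Nat.cast_nonneg n
      linarith
    rwa [intervalIntegral.integral_const_mul, hval] at hlow
  · have hup : (∫ t in (0:ℝ)..r, t ^ (s - 1) * (1 + t) ^ (-(n : ℝ) / 2)) ≤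
        (∫ t in (0:ℝ)..r, t ^ (s - 1)) := by
      apply intervalIntegral.integral_mono_on hr.le hIntG hInt1
      intro t ht
      have h1 : (1 + t) ^ (-(n : ℝ) / 2) ≤ 1 := by
        apply Real.rpow_le_one_of_one_le_of_nonpos (by linarith [ht.1])
        have : (0:ℝ) ≤ (n:ℝ) := Nat.cast_nonneg n
        linarith
      calc t ^ (s - 1) * (1 + t) ^ (-(n : ℝ) / 2) ≤ t ^ (s - 1) * 1 := by
            gcongr; exact Real.rpow_nonneg ht.1 _
        _ = t ^ (s - 1) := mul_one _
    rwa [hval] at hup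

set_option maxHeartbeats 1000000 in
/-- **Lemma 5.1**, case `n ≠ 2s` (boundary expansion of the fractional Green function
of the ball): `G((ρ-δ)e, z) = a₀(z,e) δ^s + o(δ^s)` uniformly for `z ∈ B_{ρ₀}`. -/
theorem green_boundary_expansion
    (n : ℕ) (hn : 1 ≤ n) (s : ℝ) (hs : s ∈ Set.Ioo (0 : ℝ) 1) (hns : (n : ℝ) ≠ 2 * s)
    (ρ ρ₀ : ℝ) (hρ₀ : 0 < ρ₀) (hρ₀ρ : ρ₀ < ρ)
    (e : EuclideanSpace ℝ (Fin n)) (he : ‖e‖ = 1) :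
    ∀ ε > (0 : ℝ), ∃ δ₀ > (0 : ℝ), ∀ δ : ℝ, 0 < δ → δ ≤ δ₀ →
      ∀ z ∈ ball (0 : EuclideanSpace ℝ (Fin n)) ρ₀,
        |greenFn n s ρ ((ρ - δ) • e) z -
            2 ^ s * (ρ ^ 2 - ‖z‖ ^ 2) ^ s / (s * ρ ^ s * ‖ρ • e - z‖ ^ (n : ℕ)) * δ ^ s|
          ≤ ε * δ ^ s := by
  obtain ⟨hs0, hs1⟩ := hs
  intro ε hε
  have hρ : (0:ℝ) < ρ := hρ₀.trans hρ₀ρ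
  set m : ℝ := (ρ - ρ₀) / 2 with hm_def
  have hm : 0 < m := by rw [hm_def]; linarith
  have hmρ : m < ρ := by rw [hm_def]; linarith
  have h2n1 : (1:ℝ) ≤ 2 ^ n := one_le_pow₀ (by norm_num)
  set C1 : ℝ := ((2:ℝ) ^ n - 1) * (2 * ρ / m ^ 2) * ((2 * ρ) ^ s / (s * m ^ n)) with hC1_def
  set C2 : ℝ := 1 / (s * m ^ n) with hC2_def
  set C3 : ℝ := (2 * ρ) ^ s * ((n : ℝ) * (2 * ρ) ^ (n - 1)) / (s * (m ^ n * m ^ n)) with hC3_def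
  have hC1 : 0 ≤ C1 := by
    rw [hC1_def]
    have : (0:ℝ) ≤ (2:ℝ) ^ n - 1 := by linarith
    positivity
  have hC2 : 0 < C2 := by rw [hC2_def]; positivity
  have hC3 : 0 ≤ C3 := by rw [hC3_def]; positivity
  set C : ℝ := C1 + C2 + C3 with hC_def
  have hC : 0 < C := by rw [hC_def]; linarith
  refine ⟨min (min 1 (min m (m ^ 2 / (2 * ρ)))) ((ε / C) ^ s⁻¹), ?_, ?_⟩
  · apply lt_min
    · apply lt_min one_pos (lt_min hm (by positivity))
    · apply Real.rpow_pos_of_pos (by positivity)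
  intro δ hδ hδ₀ z hzball
  have hδ1 : δ ≤ 1 := hδ₀.trans ((min_le_left _ _).trans (min_le_left _ _))
  have hδm : δ ≤ m := hδ₀.trans ((min_le_left _ _).trans ((min_le_right _ _).trans (min_le_left _ _)))
  have hδm2 : δ ≤ m ^ 2 / (2 * ρ) :=
    hδ₀.trans ((min_le_left _ _).trans ((min_le_right _ _).trans (min_le_right _ _)))
  have hδε : δ ^ s ≤ ε / C := by
    calc δ ^ s ≤ ((ε / C) ^ s⁻¹) ^ s :=
          Real.rpow_le_rpow hδ.le (hδ₀.trans (min_le_right _ _)) hs0.le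
      _ = ε / C := Real.rpow_inv_rpow (by positivity) hs0.ne'
  have hδρ : δ < ρ := lt_of_le_of_lt hδm hmρ
  have hz : ‖z‖ < ρ₀ := by simpa using mem_ball_zero_iff.mp hzball
  have hznn : 0 ≤ ‖z‖ := norm_nonneg z
  set x : EuclideanSpace ℝ (Fin n) := (ρ - δ) • e with hx_def
  have hxnorm : ‖x‖ = ρ - δ := by
    rw [hx_def, norm_smul, he, mul_one, Real.norm_eq_abs, abs_of_pos (by linarith)]
  set P : ℝ := ‖x - z‖ with hP_def
  set Q : ℝ := ‖ρ • e - z‖ with hQ_def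
  have hQnorm : ‖ρ • e‖ = ρ := by
    rw [norm_smul, he, mul_one, Real.norm_eq_abs, abs_of_pos hρ]
  have hP_lb : m ≤ P := by
    have h1 : ‖x‖ - ‖z‖ ≤ ‖x - z‖ := norm_sub_norm_le x z
    rw [hxnorm] at h1
    rw [hP_def, hm_def] at *
    linarith
  have hP0 : 0 < P := lt_of_lt_of_le hm hP_lb
  have hP_ub : P ≤ 2 * ρ := by
    have h1 : ‖x - z‖ ≤ ‖x‖ + ‖z‖ := norm_sub_le x z
    rw [hxnorm] at h1
    rw [hP_def]
    linarith
  have hQ_lb : m ≤ Q := by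
    have h1 : ‖ρ • e‖ - ‖z‖ ≤ ‖ρ • e - z‖ := norm_sub_norm_le _ z
    rw [hQnorm] at h1
    rw [hQ_def, hm_def] at *
    linarith
  have hQ0 : 0 < Q := lt_of_lt_of_le hm hQ_lb
  have hQ_ub : Q ≤ 2 * ρ := by
    have h1 : ‖ρ • e - z‖ ≤ ‖ρ • e‖ + ‖z‖ := norm_sub_le _ z
    rw [hQnorm] at h1
    rw [hQ_def]
    linarith
  have hPQ : |P - Q| ≤ δ := by
    have h1 : |‖x - z‖ - ‖ρ • e - z‖| ≤ ‖(x - z) - (ρ • e - z)‖ := abs_norm_sub_norm_le _ _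
    have h2 : (x - z) - (ρ • e - z) = (-δ) • e := by
      rw [hx_def, sub_sub_sub_cancel_right, ← sub_smul]
      congr 1
      ring
    have h3 : ‖((-δ) • e : EuclideanSpace ℝ (Fin n))‖ = δ := by
      rw [norm_smul, he, mul_one, Real.norm_eq_abs, abs_neg, abs_of_pos hδ]
    rw [h2, h3] at h1
    exact h1
  set w : ℝ := ρ ^ 2 - ‖z‖ ^ 2 with hw_def
  have hzρ : ‖z‖ ^ 2 < ρ ^ 2 := by
    have := pow_lt_pow_left₀ (hz.trans hρ₀ρ) hznn (n := 2) (by norm_num)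
    exact this
  have hw0 : 0 < w := by rw [hw_def]; linarith
  have hw1 : w ≤ ρ ^ 2 := by rw [hw_def]; linarith [sq_nonneg ‖z‖]
  set r : ℝ := rzero n ρ x z with hr_def
  have hr_eq : r = δ * (2 * ρ - δ) * w / (ρ ^ 2 * P ^ 2) := by
    rw [hr_def]
    unfold rzero
    rw [← hP_def, ← hw_def, hxnorm]
    ring
  have h2ρδ : 0 < 2 * ρ - δ := by linarith
  have hr0 : 0 < r := by rw [hr_eq]; positivity
  have hr_ub : r ≤ 2 * ρ * δ / m ^ 2 := by
    rw [hr_eq]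
    calc δ * (2 * ρ - δ) * w / (ρ ^ 2 * P ^ 2)
        ≤ δ * (2 * ρ) * ρ ^ 2 / (ρ ^ 2 * m ^ 2) := by
          apply div_le_div₀ (by positivity) ?_ (by positivity) ?_
          · exact mul_le_mul (mul_le_mul_of_nonneg_left (by linarith : 2 * ρ - δ ≤ 2 * ρ)
              hδ.le) hw1 hw0.le (by positivity)
          · gcongr
      _ = 2 * ρ * δ / m ^ 2 := by field_simp
  have hr1 : r ≤ 1 := by
    have h : 2 * ρ * δ ≤ m ^ 2 := by
      calc 2 * ρ * δ ≤ 2 * ρ * (m ^ 2 / (2 * ρ)) := by gcongr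
        _ = m ^ 2 := by field_simp
    have h2 : 2 * ρ * δ / m ^ 2 ≤ 1 := by
      rw [div_le_one (by positivity)]; exact h
    linarith
  -- the integral sandwich
  obtain ⟨hIlo, hIhi⟩ := aux_sandwich n hs0 hr0
  set I : ℝ := ∫ t in (0:ℝ)..r, t ^ (s - 1) * (1 + t) ^ (-(n : ℝ) / 2) with hI_def
  set Pre : ℝ := P ^ (2 * s - (n : ℝ)) with hPre_def
  have hPre0 : 0 < Pre := by rw [hPre_def]; exact Real.rpow_pos_of_pos hP0 _
  have hG_eq : greenFn n s ρ x z = Pre * I := by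
    unfold greenFn
    rw [← hP_def, ← hr_def, ← hI_def, ← hPre_def]
  set A : ℝ := Pre * (r ^ s / s) with hA_def
  set L : ℝ := Pre * ((1 + r) ^ (-(n : ℝ) / 2) * (r ^ s / s)) with hL_def
  have hGA : greenFn n s ρ x z ≤ A := by
    rw [hG_eq, hA_def]
    exact mul_le_mul_of_nonneg_left hIhi hPre0.le
  have hLG : L ≤ greenFn n s ρ x z := by
    rw [hG_eq, hL_def]
    exact mul_le_mul_of_nonneg_left hIlo hPre0.le
  -- explicit formula for A
  have hpow2sρ : ((ρ:ℝ) ^ 2) ^ s = ρ ^ (2 * s) := by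
    rw [← Real.rpow_natCast ρ 2, ← Real.rpow_mul hρ.le]
    norm_num
  have hpow2sP : (P ^ 2) ^ s = P ^ (2 * s) := by
    rw [← Real.rpow_natCast P 2, ← Real.rpow_mul hP0.le]
    norm_num
  have e1 : r ^ s = δ ^ s * (2 * ρ - δ) ^ s * w ^ s / (ρ ^ (2 * s) * P ^ (2 * s)) := by
    rw [hr_eq, Real.div_rpow (by positivity) (by positivity),
      Real.mul_rpow (by positivity) hw0.le, Real.mul_rpow hδ.le h2ρδ.le,
      Real.mul_rpow (by positivity) (by positivity), hpow2sρ, hpow2sP]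
  have e2 : Pre = P ^ (2 * s) / P ^ (n : ℕ) := by
    rw [hPre_def, Real.rpow_sub hP0, Real.rpow_natCast]
  have hs_ne : s ≠ 0 := hs0.ne'
  have hPn0 : (0:ℝ) < P ^ (n:ℕ) := by positivity
  have hQn0 : (0:ℝ) < Q ^ (n:ℕ) := by positivity
  have hP2s0 : (0:ℝ) < P ^ (2 * s) := Real.rpow_pos_of_pos hP0 _
  have hρ2s0 : (0:ℝ) < ρ ^ (2 * s) := Real.rpow_pos_of_pos hρ _
  have hA : A = δ ^ s * ((2 * ρ - δ) ^ s * w ^ s / (s * ρ ^ (2 * s) * P ^ (n:ℕ))) := by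
    rw [hA_def, e2, e1]
    field_simp
  have hT : 2 ^ s * w ^ s / (s * ρ ^ s * Q ^ (n:ℕ)) * δ ^ s
      = δ ^ s * ((2 * ρ) ^ s * w ^ s / (s * ρ ^ (2 * s) * Q ^ (n:ℕ))) := by
    have h2ρ : (2 * ρ) ^ s = 2 ^ s * ρ ^ s := Real.mul_rpow (by norm_num) hρ.le
    have hρ2 : ρ ^ (2 * s) = ρ ^ s * ρ ^ s := by
      rw [← Real.rpow_add hρ]; ring_nf
    rw [h2ρ, hρ2]
    have hρs0 : (0:ℝ) < ρ ^ s := Real.rpow_pos_of_pos hρ _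
    field_simp
  set T : ℝ := 2 ^ s * w ^ s / (s * ρ ^ s * Q ^ (n:ℕ)) * δ ^ s with hT_def
  -- bound A from above
  have hws : w ^ s ≤ ρ ^ (2 * s) := by
    calc w ^ s ≤ (ρ ^ 2) ^ s := Real.rpow_le_rpow hw0.le hw1 hs0.le
      _ = ρ ^ (2 * s) := hpow2sρ
  have h2ρδs : (2 * ρ - δ) ^ s ≤ (2 * ρ) ^ s := Real.rpow_le_rpow h2ρδ.le (by linarith) hs0.le
  have hmn : m ^ n ≤ P ^ (n:ℕ) := pow_le_pow_left₀ hm.le hP_lb n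
  have hmnQ : m ^ n ≤ Q ^ (n:ℕ) := pow_le_pow_left₀ hm.le hQ_lb n
  have hA_ub : A ≤ δ ^ s * ((2 * ρ) ^ s / (s * m ^ n)) := by
    rw [hA]
    refine mul_le_mul_of_nonneg_left ?_ (Real.rpow_nonneg hδ.le s)
    calc (2 * ρ - δ) ^ s * w ^ s / (s * ρ ^ (2 * s) * P ^ (n:ℕ))
        ≤ (2 * ρ) ^ s * ρ ^ (2 * s) / (s * ρ ^ (2 * s) * m ^ n) := by
          apply div_le_div₀ (by positivity) ?_ (by positivity) ?_
          · exact mul_le_mul h2ρδs hws (Real.rpow_nonneg hw0.le _) (by positivity)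
          · gcongr
      _ = (2 * ρ) ^ s / (s * m ^ n) := by field_simp
  have hA0 : 0 ≤ A := by rw [hA_def]; positivity
  -- bound A - L
  have hθ1 : (1 + r) ^ (-(n : ℝ) / 2) ≤ 1 := by
    apply Real.rpow_le_one_of_one_le_of_nonpos (by linarith)
    have : (0:ℝ) ≤ (n:ℝ) := Nat.cast_nonneg n
    linarith
  have hAL_eq : A - L = (1 - (1 + r) ^ (-(n : ℝ) / 2)) * A := by
    rw [hA_def, hL_def]; ring
  have hAL0 : 0 ≤ A - L := by
    rw [hAL_eq]
    apply mul_nonneg (by linarith) hA0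
  have hAL : A - L ≤ δ ^ s * (C1 * δ) := by
    rw [hAL_eq]
    calc (1 - (1 + r) ^ (-(n : ℝ) / 2)) * A
        ≤ (((2:ℝ) ^ n - 1) * r) * A := by
          apply mul_le_mul_of_nonneg_right (aux_one_sub_rpow n hr0.le hr1) hA0
      _ ≤ (((2:ℝ) ^ n - 1) * (2 * ρ * δ / m ^ 2)) * (δ ^ s * ((2 * ρ) ^ s / (s * m ^ n))) := by
          apply mul_le_mul ?_ hA_ub hA0 ?_
          · apply mul_le_mul_of_nonneg_left hr_ub (by linarith)
          · have : (0:ℝ) ≤ (2:ℝ) ^ n - 1 := by linarith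
            positivity
      _ = δ ^ s * (C1 * δ) := by rw [hC1_def]; field_simp
  -- bound |A - T|
  have hab : (2 * ρ) ^ s - (2 * ρ - δ) ^ s ≤ δ ^ s := by
    have h := aux_rpow_sub hs0.le hs1.le h2ρδ.le (by linarith : 2 * ρ - δ ≤ 2 * ρ)
    have : 2 * ρ - (2 * ρ - δ) = δ := by ring
    rwa [this] at h
  have hQPn : |Q ^ (n:ℕ) - P ^ (n:ℕ)| ≤ (n:ℝ) * (2 * ρ) ^ (n - 1) * δ := by
    have h := aux_pow_sub_pow n hQ0.le hP0.le hQ_ub hP_ub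
    have h2 : |Q - P| ≤ δ := by rw [abs_sub_comm]; exact hPQ
    calc |Q ^ (n:ℕ) - P ^ (n:ℕ)| ≤ (n:ℝ) * (2 * ρ) ^ (n - 1) * |Q - P| := h
      _ ≤ (n:ℝ) * (2 * ρ) ^ (n - 1) * δ := by
          apply mul_le_mul_of_nonneg_left h2 (by positivity)
  have hsplit : (2 * ρ - δ) ^ s / P ^ (n:ℕ) - (2 * ρ) ^ s / Q ^ (n:ℕ)
      = ((2 * ρ - δ) ^ s - (2 * ρ) ^ s) / P ^ (n:ℕ)
        + (2 * ρ) ^ s * (Q ^ (n:ℕ) - P ^ (n:ℕ)) / (P ^ (n:ℕ) * Q ^ (n:ℕ)) := by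
    field_simp
    ring
  have hbr : |(2 * ρ - δ) ^ s / P ^ (n:ℕ) - (2 * ρ) ^ s / Q ^ (n:ℕ)|
      ≤ δ ^ s / m ^ n + (2 * ρ) ^ s * ((n:ℝ) * (2 * ρ) ^ (n - 1) * δ) / (m ^ n * m ^ n) := by
    rw [hsplit]
    have hd1 : |((2 * ρ - δ) ^ s - (2 * ρ) ^ s)| ≤ δ ^ s := by
      rw [abs_sub_comm, abs_of_nonneg (by linarith)]
      exact hab
    have ht1 : |((2 * ρ - δ) ^ s - (2 * ρ) ^ s) / P ^ (n:ℕ)| ≤ δ ^ s / m ^ n := by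
      rw [abs_div, abs_of_pos hPn0]
      exact div_le_div₀ (Real.rpow_nonneg hδ.le s) hd1 (by positivity) hmn
    have ht2 : |(2 * ρ) ^ s * (Q ^ (n:ℕ) - P ^ (n:ℕ)) / (P ^ (n:ℕ) * Q ^ (n:ℕ))|
        ≤ (2 * ρ) ^ s * ((n:ℝ) * (2 * ρ) ^ (n - 1) * δ) / (m ^ n * m ^ n) := by
      rw [abs_div, abs_of_pos (by positivity : (0:ℝ) < P ^ (n:ℕ) * Q ^ (n:ℕ)), abs_mul,
        abs_of_nonneg (Real.rpow_nonneg (by linarith : (0:ℝ) ≤ 2 * ρ) s)]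
      apply div_le_div₀ (by positivity) ?_ (by positivity) ?_
      · exact mul_le_mul_of_nonneg_left hQPn (Real.rpow_nonneg (by linarith) s)
      · exact mul_le_mul hmn hmnQ (by positivity) (by positivity)
    calc |((2 * ρ - δ) ^ s - (2 * ρ) ^ s) / P ^ (n:ℕ)
          + (2 * ρ) ^ s * (Q ^ (n:ℕ) - P ^ (n:ℕ)) / (P ^ (n:ℕ) * Q ^ (n:ℕ))|
        ≤ |((2 * ρ - δ) ^ s - (2 * ρ) ^ s) / P ^ (n:ℕ)|
          + |(2 * ρ) ^ s * (Q ^ (n:ℕ) - P ^ (n:ℕ)) / (P ^ (n:ℕ) * Q ^ (n:ℕ))| := abs_add_le _ _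
      _ ≤ δ ^ s / m ^ n + (2 * ρ) ^ s * ((n:ℝ) * (2 * ρ) ^ (n - 1) * δ) / (m ^ n * m ^ n) :=
          add_le_add ht1 ht2
  have hAT_eq : A - T = δ ^ s * (w ^ s / (s * ρ ^ (2 * s)))
      * ((2 * ρ - δ) ^ s / P ^ (n:ℕ) - (2 * ρ) ^ s / Q ^ (n:ℕ)) := by
    rw [hA, hT]
    field_simp
  have hAT : |A - T| ≤ δ ^ s * (C2 * δ ^ s + C3 * δ) := by
    rw [hAT_eq, abs_mul, abs_mul]
    rw [abs_of_nonneg (Real.rpow_nonneg hδ.le s), abs_of_nonneg (by positivity : (0:ℝ) ≤ w ^ s / (s * ρ ^ (2 * s)))]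
    calc δ ^ s * (w ^ s / (s * ρ ^ (2 * s)))
          * |(2 * ρ - δ) ^ s / P ^ (n:ℕ) - (2 * ρ) ^ s / Q ^ (n:ℕ)|
        ≤ δ ^ s * (1 / s)
          * (δ ^ s / m ^ n + (2 * ρ) ^ s * ((n:ℝ) * (2 * ρ) ^ (n - 1) * δ) / (m ^ n * m ^ n)) := by
          apply mul_le_mul ?_ hbr (abs_nonneg _) (by positivity)
          apply mul_le_mul_of_nonneg_left ?_ (Real.rpow_nonneg hδ.le s)
          calc w ^ s / (s * ρ ^ (2 * s)) ≤ ρ ^ (2 * s) / (s * ρ ^ (2 * s)) :=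
                div_le_div₀ (by positivity) hws (by positivity) le_rfl
            _ = 1 / s := by field_simp
      _ = δ ^ s * (C2 * δ ^ s + C3 * δ) := by rw [hC2_def, hC3_def]; field_simp
  -- put everything together
  have hG_sub : |greenFn n s ρ x z - T| ≤ |A - T| + (A - L) := by
    rw [abs_le]
    constructor
    · have h1 : -(|A - T|) ≤ A - T := neg_abs_le _
      linarith
    · have h1 : A - T ≤ |A - T| := le_abs_self _
      linarith
  have hδs : δ ≤ δ ^ s := by
    calc δ = δ ^ (1:ℝ) := (Real.rpow_one δ).symm
      _ ≤ δ ^ s := Real.rpow_le_rpow_of_exponent_ge hδ hδ1 hs1.le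
  have hfinal : |greenFn n s ρ x z - T| ≤ δ ^ s * (C * δ ^ s) := by
    have h1 : |A - T| + (A - L) ≤ δ ^ s * (C2 * δ ^ s + C3 * δ) + δ ^ s * (C1 * δ) := by
      linarith
    have h2 : δ ^ s * (C2 * δ ^ s + C3 * δ) + δ ^ s * (C1 * δ) ≤ δ ^ s * (C * δ ^ s) := by
      have hδs0 : 0 ≤ δ ^ s := Real.rpow_nonneg hδ.le s
      have h3 : C3 * δ ≤ C3 * δ ^ s := mul_le_mul_of_nonneg_left hδs hC3
      have h4 : C1 * δ ≤ C1 * δ ^ s := mul_le_mul_of_nonneg_left hδs hC1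
      calc δ ^ s * (C2 * δ ^ s + C3 * δ) + δ ^ s * (C1 * δ)
          = δ ^ s * (C2 * δ ^ s + C3 * δ + C1 * δ) := by ring
        _ ≤ δ ^ s * (C * δ ^ s) := by
            apply mul_le_mul_of_nonneg_left ?_ hδs0
            rw [hC_def]
            linarith
    linarith [hG_sub]
  calc |greenFn n s ρ x z - T| ≤ δ ^ s * (C * δ ^ s) := hfinal
    _ ≤ δ ^ s * (C * (ε / C)) := by gcongr
    _ = ε * δ ^ s := by field_simp
end
end

section
/- Boundary expansion of the fractional Green function, logarithmic case n = 1, s = 1/2 (Lemma 5.1, case n = 2s). Let ρ > 0 and 0 < ρ₀ < ρ. Define, for x, z ∈ (−ρ, ρ) with x ≠ z, G(x,z) := log( (ρ² − xz + √((ρ² − x²)(ρ² − z²)) ) / (ρ |z − x|) ). Then there exist constants C > 0 and δ₀ > 0 such that for every δ ∈ (0, δ₀] and every z with |z| ≤ ρ₀, | G(ρ − δ, z) − (√(2(ρ² − z²)) / (√ρ (ρ − z))) δ^{1/2} | ≤ C δ. -/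
set_option maxHeartbeats 1000000

open Filter Set Real
open scoped Topology

noncomputable section

/-- The fractional Green function of the interval `(-ρ, ρ)` for `(-Δ)^{1/2}` (case
`n = 1`, `s = 1/2`), up to a positive normalizing constant. -/
def greenLog (ρ x z : ℝ) : ℝ :=
  Real.log ((ρ ^ 2 - x * z + Real.sqrt ((ρ ^ 2 - x ^ 2) * (ρ ^ 2 - z ^ 2))) / (ρ * |z - x|))

/-- **Lemma 5.1**, logarithmic case `n = 1`, `s = 1/2`:
`G(ρ-δ, z) = √(2(ρ²-z²))/(√ρ (ρ-z)) δ^{1/2} + O(δ)` uniformly for `|z| ≤ ρ₀`. -/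
theorem green_boundary_expansion_log
    (ρ ρ₀ : ℝ) (hρ₀ : 0 < ρ₀) (hρ₀ρ : ρ₀ < ρ) :
    ∃ C > (0 : ℝ), ∃ δ₀ > (0 : ℝ), ∀ δ : ℝ, 0 < δ → δ ≤ δ₀ → ∀ z : ℝ, |z| ≤ ρ₀ →
      |greenLog ρ (ρ - δ) z -
          Real.sqrt (2 * (ρ ^ 2 - z ^ 2)) / (Real.sqrt ρ * (ρ - z)) * δ ^ ((1 : ℝ) / 2)|
        ≤ C * δ := by
  have hρ : 0 < ρ := hρ₀.trans hρ₀ρ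
  have hεpos : 0 < ρ - ρ₀ := sub_pos.2 hρ₀ρ
  set ε : ℝ := ρ - ρ₀ with hεdef
  set σ : ℝ := Real.sqrt (2*ρ) with hσdef
  have hσpos : 0 < σ := Real.sqrt_pos.2 (by linarith)
  have hσsq : σ * σ = 2*ρ := Real.mul_self_sqrt (by linarith)
  set t₀ : ℝ := Real.sqrt (ε/2) with ht₀def
  have ht₀pos : 0 < t₀ := Real.sqrt_pos.2 (by linarith)
  set C₁ : ℝ := 4/ε + t₀ * (4 * σ) / ε^2 with hC₁def
  have hC₁ : 0 < C₁ := by positivity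
  set amax : ℝ := σ / ε with hamaxdef
  have hamax : 0 < amax := by positivity
  refine ⟨C₁ + (amax + C₁ * t₀)^2, by positivity, ε/2, by positivity, ?_⟩
  intro δ hδ hδ₀ z hz
  obtain ⟨hz1, hz2⟩ := abs_le.1 hz
  set t := Real.sqrt δ with htdef
  have ht : 0 < t := Real.sqrt_pos.2 hδ
  have ht2 : t^2 = δ := Real.sq_sqrt hδ.le
  have htt₀ : t ≤ t₀ := Real.sqrt_le_sqrt hδ₀
  have hzρ₀ : z ≤ ρ - ε := by linarith
  have hDε : ε ≤ ρ - z := by linarith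
  have hD2ρ : ρ - z ≤ 2*ρ := by linarith
  have hDδ : ε/2 ≤ ρ - z - δ := by linarith
  have hDδpos : 0 < ρ - z - δ := by linarith
  have hDpos : 0 < ρ - z := by linarith
  have hP1 : ε^2 ≤ ρ^2 - z^2 := by
    have hzsq : z^2 ≤ ρ₀^2 := sq_le_sq' (by linarith) hz2
    have h2 : ρ₀ * ρ₀ ≤ ρ * ρ₀ := mul_le_mul_of_nonneg_right hρ₀ρ.le hρ₀.le
    rw [hεdef]
    linarith [hzsq, h2]
  have hP2 : ρ^2 - z^2 ≤ ρ^2 := by linarith [sq_nonneg z]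
  have hPpos : 0 < ρ^2 - z^2 := lt_of_lt_of_le (by positivity) hP1
  set P : ℝ := ρ^2 - z^2 with hPdef
  set S : ℝ := Real.sqrt ((2*ρ - δ)*P) with hSdef
  set Q : ℝ := Real.sqrt ((2*ρ)*P) with hQdef
  have hQpos : 0 < Q := Real.sqrt_pos.2 (by positivity)
  have hSnn : 0 ≤ S := Real.sqrt_nonneg _
  set u : ℝ := (t * S + δ*(ρ+z)) / (ρ*(ρ - z - δ)) with hudef
  set a : ℝ := Q / (ρ * (ρ - z)) with hadef
  have hρne : ρ ≠ 0 := hρ.ne'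
  have hDδne : ρ - z - δ ≠ 0 := hDδpos.ne'
  have hDne : ρ - z ≠ 0 := hDpos.ne'
  -- the Green function as log (1 + u)
  have key : greenLog ρ (ρ - δ) z = Real.log (1 + u) := by
    unfold greenLog
    have habs : |z - (ρ - δ)| = ρ - z - δ := by
      rw [abs_of_neg (by linarith : z - (ρ - δ) < 0)]; ring
    have hx2 : (ρ^2 - (ρ - δ)^2) * (ρ^2 - z^2) = δ * ((2*ρ - δ)*P) := by
      rw [hPdef]; ring
    rw [habs, hx2, Real.sqrt_mul hδ.le, ← htdef, ← hSdef]
    congr 1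
    rw [hudef]
    field_simp
    ring
  -- bound |S - Q|
  have hSQ1 : S ≤ Q := Real.sqrt_le_sqrt (by linarith [mul_nonneg hδ.le hPpos.le])
  have hsqrtP : Real.sqrt P ≤ ρ := by
    rw [show ρ = Real.sqrt (ρ^2) by rw [Real.sqrt_sq hρ.le]]
    exact Real.sqrt_le_sqrt hP2
  have hsqrtPnn : 0 ≤ Real.sqrt P := Real.sqrt_nonneg _
  have hQfac : Q = σ * Real.sqrt P := by
    rw [hQdef, hσdef, Real.sqrt_mul (by linarith : (0:ℝ) ≤ 2*ρ)]
  have hSfac : S = Real.sqrt (2*ρ - δ) * Real.sqrt P := by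
    rw [hSdef, Real.sqrt_mul (by linarith : (0:ℝ) ≤ 2*ρ - δ)]
  have hsub : σ - Real.sqrt (2*ρ - δ) ≤ δ / σ := by
    have h2 : Real.sqrt (2*ρ - δ) * Real.sqrt (2*ρ - δ) = 2*ρ - δ :=
      Real.mul_self_sqrt (by linarith)
    have h3 : Real.sqrt (2*ρ - δ) ≤ σ := Real.sqrt_le_sqrt (by linarith)
    have h4 : 0 ≤ Real.sqrt (2*ρ - δ) := Real.sqrt_nonneg _
    rw [le_div_iff₀ hσpos]
    have h5 : Real.sqrt (2*ρ - δ) * Real.sqrt (2*ρ - δ) ≤ σ * Real.sqrt (2*ρ - δ) :=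
      mul_le_mul_of_nonneg_right h3 h4
    have h6 : (σ - Real.sqrt (2*ρ - δ)) * σ
        = σ * σ - σ * Real.sqrt (2*ρ - δ) := by ring
    rw [h6, hσsq]
    linarith [h5, h2]
  have hSQ2 : Q - S ≤ δ * Real.sqrt P / σ := by
    rw [hQfac, hSfac]
    calc σ * Real.sqrt P - Real.sqrt (2*ρ - δ) * Real.sqrt P
        = (σ - Real.sqrt (2*ρ - δ)) * Real.sqrt P := by ring
      _ ≤ (δ / σ) * Real.sqrt P := mul_le_mul_of_nonneg_right hsub hsqrtPnn
      _ = δ * Real.sqrt P / σ := by ring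
  have hQle : Q ≤ ρ * σ := by
    rw [hQfac]
    calc σ * Real.sqrt P ≤ σ * ρ := mul_le_mul_of_nonneg_left hsqrtP hσpos.le
      _ = ρ * σ := by ring
  -- |u - a t| decomposition
  have hBdef : u - a * t = δ*(ρ+z)/(ρ*(ρ - z - δ))
      + t * ((ρ - z) * (S - Q) + Q * δ) / (ρ * (ρ - z - δ) * (ρ - z)) := by
    rw [hudef, hadef]
    field_simp
    ring
  have hnum : |(ρ - z) * (S - Q) + Q * δ| ≤ 2 * ρ * σ * δ := by
    have h1 : |(ρ - z) * (S - Q)| ≤ (2*ρ) * (δ * Real.sqrt P / σ) := by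
      rw [abs_mul, abs_of_nonneg (by linarith : (0:ℝ) ≤ ρ - z),
        abs_of_nonpos (by linarith : S - Q ≤ 0)]
      apply mul_le_mul hD2ρ (by linarith) (by linarith) (by linarith)
    have h2 : (2*ρ) * (δ * Real.sqrt P / σ) ≤ ρ * σ * δ := by
      rw [← hσsq]
      rw [show σ*σ*(δ * Real.sqrt P / σ) = σ * δ * Real.sqrt P by field_simp]
      calc σ * δ * Real.sqrt P ≤ σ * δ * ρ :=
            mul_le_mul_of_nonneg_left hsqrtP (by positivity)
        _ = ρ * σ * (σ * σ) / 2 * δ / ρ := by rw [hσsq]; field_simp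
        _ = ρ * σ * δ := by rw [hσsq]; field_simp
    have h3 : |Q * δ| ≤ ρ * σ * δ := by
      rw [abs_mul, abs_of_nonneg hQpos.le, abs_of_nonneg hδ.le]
      exact mul_le_mul_of_nonneg_right hQle hδ.le
    calc |(ρ - z) * (S - Q) + Q * δ| ≤ |(ρ - z) * (S - Q)| + |Q * δ| := abs_add_le _ _
      _ ≤ ρ * σ * δ + ρ * σ * δ := add_le_add (h1.trans h2) h3
      _ = 2 * ρ * σ * δ := by ring
  have hterm1 : δ*(ρ+z)/(ρ*(ρ - z - δ)) ≤ (4/ε) * δ := by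
    rw [div_le_iff₀ (by positivity), div_mul_eq_mul_div, div_mul_eq_mul_div,
      le_div_iff₀ hεpos]
    have k1 : (ρ+z) * (δ*ε) ≤ 2*ρ * (δ*ε) :=
      mul_le_mul_of_nonneg_right (by linarith) (by positivity)
    have k2 : (4*δ*ρ) * (ε/2) ≤ (4*δ*ρ) * (ρ - z - δ) :=
      mul_le_mul_of_nonneg_left hDδ (by positivity)
    calc δ*(ρ+z)*ε = (ρ+z)*(δ*ε) := by ring
      _ ≤ 2*ρ * (δ*ε) := k1
      _ = (4*δ*ρ) * (ε/2) := by ring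
      _ ≤ (4*δ*ρ) * (ρ - z - δ) := k2
      _ = 4*δ*(ρ*(ρ - z - δ)) := by ring
  have hterm1' : 0 ≤ δ*(ρ+z)/(ρ*(ρ - z - δ)) := by
    apply div_nonneg _ (by positivity)
    have : 0 ≤ ρ + z := by linarith
    positivity
  have hterm2 : |t * ((ρ - z) * (S - Q) + Q * δ) / (ρ * (ρ - z - δ) * (ρ - z))|
      ≤ t₀ * (4 * σ) / ε^2 * δ := by
    rw [abs_div, abs_mul, abs_of_nonneg ht.le,
      abs_of_nonneg (by positivity : (0:ℝ) ≤ ρ * (ρ - z - δ) * (ρ - z))]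
    rw [div_le_iff₀ (by positivity)]
    have hd : ρ * (ε/2 * ε) ≤ ρ * (ρ - z - δ) * (ρ - z) := by
      have h := mul_le_mul hDδ hDε hεpos.le (by linarith : (0:ℝ) ≤ ρ - z - δ)
      calc ρ * (ε/2 * ε) ≤ ρ * ((ρ - z - δ) * (ρ - z)) :=
            mul_le_mul_of_nonneg_left h hρ.le
        _ = ρ * (ρ - z - δ) * (ρ - z) := by ring
    calc t * |(ρ - z) * (S - Q) + Q * δ|
        ≤ t₀ * (2 * ρ * σ * δ) := mul_le_mul htt₀ hnum (abs_nonneg _) ht₀pos.le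
      _ = t₀ * (4 * σ) / ε^2 * δ * (ρ * (ε/2 * ε)) := by field_simp; ring
      _ ≤ t₀ * (4 * σ) / ε^2 * δ * (ρ * (ρ - z - δ) * (ρ - z)) :=
          mul_le_mul_of_nonneg_left hd (by positivity)
  have husub : |u - a * t| ≤ C₁ * δ := by
    rw [hBdef, hC₁def]
    calc |δ*(ρ+z)/(ρ*(ρ - z - δ))
        + t * ((ρ - z) * (S - Q) + Q * δ) / (ρ * (ρ - z - δ) * (ρ - z))|
        ≤ |δ*(ρ+z)/(ρ*(ρ - z - δ))|
          + |t * ((ρ - z) * (S - Q) + Q * δ) / (ρ * (ρ - z - δ) * (ρ - z))| := abs_add_le _ _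
      _ ≤ (4/ε) * δ + t₀ * (4 * σ) / ε^2 * δ := by
          rw [abs_of_nonneg hterm1']
          exact add_le_add hterm1 hterm2
      _ = (4/ε + t₀ * (4 * σ) / ε^2) * δ := by ring
  -- bounds on u
  have hu0 : 0 ≤ u := by
    apply div_nonneg _ (by positivity)
    have h0 : 0 ≤ ρ + z := by linarith
    positivity
  have haamax : a ≤ amax := by
    rw [hadef, hamaxdef]
    calc Q / (ρ * (ρ - z)) ≤ (ρ * σ) / (ρ * ε) :=
          div_le_div₀ (by positivity) hQle (by positivity)
            (mul_le_mul_of_nonneg_left hDε hρ.le)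
      _ = σ / ε := by rw [mul_div_mul_left _ _ hρne]
  have hu_le : u ≤ (amax + C₁ * t₀) * t := by
    have h1 : u - a * t ≤ C₁ * δ := (abs_le.1 husub).2
    have h2 : a * t ≤ amax * t := mul_le_mul_of_nonneg_right haamax ht.le
    have h3 : C₁ * δ = C₁ * t * t := by rw [← ht2]; ring
    have h4 : C₁ * t * t ≤ C₁ * t₀ * t :=
      mul_le_mul_of_nonneg_right (mul_le_mul_of_nonneg_left htt₀ hC₁.le) ht.le
    have h5 : (amax + C₁ * t₀) * t = amax * t + C₁ * t₀ * t := by ring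
    linarith
  have hu_sq : u^2 ≤ (amax + C₁ * t₀)^2 * δ := by
    have h6 := mul_le_mul hu_le hu_le hu0 (by positivity)
    calc u^2 = u * u := sq u
      _ ≤ ((amax + C₁ * t₀) * t) * ((amax + C₁ * t₀) * t) := h6
      _ = (amax + C₁ * t₀)^2 * t^2 := by ring
      _ = (amax + C₁ * t₀)^2 * δ := by rw [ht2]
  -- log estimate
  have h1u : 0 < 1 + u := by linarith
  have hlog : |Real.log (1 + u) - u| ≤ u^2 := by
    have hle : Real.log (1 + u) ≤ u := by
      have := Real.log_le_sub_one_of_pos h1u; linarith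
    have hge : u - u^2 ≤ Real.log (1 + u) := by
      have h2 := Real.log_le_sub_one_of_pos (show (0:ℝ) < (1+u)⁻¹ by positivity)
      rw [Real.log_inv] at h2
      have h3 : (1+u)⁻¹ ≤ 1 - u + u^2 := by
        rw [inv_eq_one_div, div_le_iff₀ h1u]
        have h4 : (1 - u + u^2) * (1+u) = 1 + u^3 := by ring
        rw [h4]
        have := pow_nonneg hu0 3
        linarith
      linarith
    rw [abs_le]
    constructor
    · linarith
    · have := sq_nonneg u; linarith
  -- rewrite the target coefficient
  have hcoef : Real.sqrt (2 * P) / (Real.sqrt ρ * (ρ - z)) * δ ^ ((1:ℝ)/2)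
      = a * t := by
    have hrpow : δ ^ ((1:ℝ)/2) = t := by
      rw [htdef, Real.sqrt_eq_rpow]
    rw [hrpow, hadef]
    congr 1
    have hQ' : Q = Real.sqrt ρ * Real.sqrt (2 * P) := by
      rw [hQdef, show (2*ρ)*P = ρ * (2*P) by ring, Real.sqrt_mul hρ.le]
    rw [hQ']
    have hss : Real.sqrt ρ * Real.sqrt ρ = ρ := Real.mul_self_sqrt hρ.le
    have hsρpos : 0 < Real.sqrt ρ := Real.sqrt_pos.2 hρ
    rw [div_eq_div_iff (by positivity) (by positivity)]
    linear_combination (-(Real.sqrt (2*P) * (ρ - z))) * hss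
  rw [key, hcoef]
  calc |Real.log (1 + u) - a * t|
      ≤ |Real.log (1 + u) - u| + |u - a * t| := by
        have h7 := abs_add_le (Real.log (1 + u) - u) (u - a * t)
        simpa using h7
    _ ≤ u^2 + C₁ * δ := add_le_add hlog husub
    _ ≤ (amax + C₁ * t₀)^2 * δ + C₁ * δ := by linarith
    _ = (C₁ + (amax + C₁ * t₀)^2) * δ := by ring
end
end
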